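/- For integers d ≥ 1 and 0 ≤ q < d, the constant term of the Laurent expansion at t = 1 of (1/d) · Σ_{α^d = 1} α^{-q}/(1 - α t)² equals -(d-1)(d-5)/(12d) - (q² + 2q - qd)/(2d). -/

import Mathlib

/-!
Write `S k q = ∑ α⁻¹ ^ q / (1 - α) ^ k` over the `d`-th roots of unity `α ≠ 1`
(`nontrivialRootSum`). The term `α = 1` of the sum is exactly `1 / (d (1 - t) ^ 2)` and the
other terms are regular at `t = 1`, so the constant term is `S 2 q / d`.
Since `α⁻¹ - 1 = α⁻¹ (1 - α)`, we have `S (k+1) (q+1) = S (k+1) q + S k (q+1)`. Power sums of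
roots of unity give `S 0 q = -1` for `0 < q < d`, and the symmetry `α ↦ α⁻¹` gives
`S 1 0 = (d - 1) / 2`. This determines `S 1 q`, and `S 2 q` up to `S 2 0`, which is then fixed
by `∑_{q<d} S 2 q = 0`, a geometric sum in each `α⁻¹`.
-/

open BigOperators Filter Polynomial Finset

lemma sum_range_natCast_mul_sub {K : Type*} [Field K] [CharZero K] (n : ℕ) (a : K) :
    ∑ q ∈ range n, (q : K) * (a - q) = n * (n - 1) * (3 * a - 2 * n + 1) / 6 := by
  induction n with
  | zero => simp
  | succ n ih =>
    rw [sum_range_succ, ih]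
    push_cast
    ring

section RootsOfUnity

variable {K : Type*} [Field K] {d : ℕ}

lemma inv_mem_nthRootsFinset_one {α : K} (hα : α ∈ nthRootsFinset d (1 : K)) :
    α⁻¹ ∈ nthRootsFinset d (1 : K) := by
  rcases d.eq_zero_or_pos with rfl | hd
  · simp at hα
  rw [mem_nthRootsFinset hd] at hα ⊢
  rw [inv_pow, hα, inv_one]

lemma sum_erase_one_nthRootsFinset_inv [DecidableEq K] {M : Type*} [AddCommMonoid M]
    (f : K → M) :
    ∑ α ∈ (nthRootsFinset d (1 : K)).erase 1, f α⁻¹ =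
      ∑ α ∈ (nthRootsFinset d (1 : K)).erase 1, f α := by
  have hinv : ∀ α ∈ (nthRootsFinset d (1 : K)).erase 1,
      α⁻¹ ∈ (nthRootsFinset d (1 : K)).erase 1 :=
    fun α hα => mem_erase.2 ⟨inv_ne_one.2 (ne_of_mem_erase hα),
      inv_mem_nthRootsFinset_one (mem_of_mem_erase hα)⟩
  exact sum_nbij' (· ⁻¹) (· ⁻¹) hinv hinv (fun α _ => inv_inv α) (fun α _ => inv_inv α)
    (fun _ _ => rfl)

lemma IsPrimitiveRoot.sum_nthRootsFinset_one {M : Type*} [AddCommMonoid M] {ζ : K}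
    (hζ : IsPrimitiveRoot ζ d) (f : K → M) :
    ∑ α ∈ nthRootsFinset d (1 : K), f α = ∑ i ∈ range d, f (ζ ^ i) := by
  classical
  rw [sum_eq_multiset_sum, nthRootsFinset_def, Multiset.toFinset_val,
    hζ.nthRoots_one_nodup.dedup, hζ.nthRoots_eq (one_pow d), Multiset.map_map, ← range_val,
    ← sum_eq_multiset_sum]
  simp only [Function.comp_apply, mul_one]

lemma IsPrimitiveRoot.sum_nthRootsFinset_pow_eq_zero {ζ : K} (hζ : IsPrimitiveRoot ζ d)
    {m : ℕ} (hm₀ : 0 < m) (hmd : m < d) : ∑ α ∈ nthRootsFinset d (1 : K), α ^ m = 0 := by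
  have hζm : ζ ^ m ≠ 1 := hζ.pow_ne_one_of_pos_of_lt hm₀.ne' hmd
  have hζmd : (ζ ^ m) ^ d = 1 := by rw [← pow_mul, mul_comm, pow_mul, hζ.pow_eq_one, one_pow]
  simp_rw [hζ.sum_nthRootsFinset_one, ← pow_mul, mul_comm _ m, pow_mul]
  rw [geom_sum_eq hζm, hζmd, sub_self, zero_div]

lemma sum_erase_one_nthRootsFinset_pow_eq_neg_one [DecidableEq K] {ζ : K}
    (hζ : IsPrimitiveRoot ζ d) {m : ℕ} (hm₀ : 0 < m) (hmd : m < d) :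
    ∑ α ∈ (nthRootsFinset d (1 : K)).erase 1, α ^ m = -1 := by
  have h := hζ.sum_nthRootsFinset_pow_eq_zero hm₀ hmd
  rw [← add_sum_erase _ _ (one_mem_nthRootsFinset (hm₀.trans hmd)), one_pow] at h
  linear_combination h

end RootsOfUnity

section NontrivialRootSum

variable (K : Type*) [Field K] [DecidableEq K]

noncomputable def nontrivialRootSum (d k q : ℕ) : K :=
  ∑ α ∈ (nthRootsFinset d (1 : K)).erase 1, α⁻¹ ^ q / (1 - α) ^ k

variable {K} {d : ℕ}

lemma ne_zero_and_one_sub_ne_zero_of_mem_erase_one {α : K}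
    (hα : α ∈ (nthRootsFinset d (1 : K)).erase 1) : α ≠ 0 ∧ 1 - α ≠ 0 :=
  ⟨ne_zero_of_mem_nthRootsFinset one_ne_zero (mem_of_mem_erase hα),
    sub_ne_zero.2 (ne_of_mem_erase hα).symm⟩

lemma nontrivialRootSum_succ_succ (k q : ℕ) :
    nontrivialRootSum K d (k + 1) (q + 1) =
      nontrivialRootSum K d (k + 1) q + nontrivialRootSum K d k (q + 1) := by
  rw [nontrivialRootSum, nontrivialRootSum, nontrivialRootSum, ← sum_add_distrib]
  refine sum_congr rfl fun α hα => ?_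
  obtain ⟨hα₀, hα₁⟩ := ne_zero_and_one_sub_ne_zero_of_mem_erase_one hα
  simp only [inv_pow]
  field_simp
  ring

lemma sum_range_nontrivialRootSum (k : ℕ) :
    ∑ q ∈ range d, nontrivialRootSum K d k q = 0 := by
  unfold nontrivialRootSum
  rw [sum_comm]
  refine sum_eq_zero fun α hα => ?_
  have hα₁ : α⁻¹ ≠ 1 := inv_ne_one.2 (ne_of_mem_erase hα)
  have hαd : α⁻¹ ^ d = 1 := by
    rcases d.eq_zero_or_pos with rfl | hd
    · exact pow_zero _
    rw [inv_pow, (mem_nthRootsFinset hd 1).1 (mem_of_mem_erase hα), inv_one]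
  rw [← sum_div, geom_sum_eq hα₁, hαd, sub_self, zero_div, zero_div]

lemma nontrivialRootSum_zero_left {ζ : K} (hζ : IsPrimitiveRoot ζ d) {q : ℕ} (hq₀ : 0 < q)
    (hqd : q < d) : nontrivialRootSum K d 0 q = -1 := by
  simp only [nontrivialRootSum, pow_zero, div_one]
  rw [sum_erase_one_nthRootsFinset_inv (· ^ q),
    sum_erase_one_nthRootsFinset_pow_eq_neg_one hζ hq₀ hqd]

lemma nontrivialRootSum_one_zero [CharZero K] {ζ : K} (hζ : IsPrimitiveRoot ζ d) (hd : 0 < d) :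
    nontrivialRootSum K d 1 0 = ((d : K) - 1) / 2 := by
  set F := (nthRootsFinset d (1 : K)).erase 1
  have hpair : ∀ α ∈ F, 1 / (1 - α) + 1 / (1 - α⁻¹) = (1 : K) := by
    intro α hα
    obtain ⟨hα₀, hα₁⟩ := ne_zero_and_one_sub_ne_zero_of_mem_erase_one hα
    have hα₁' : α - 1 ≠ 0 := sub_ne_zero.2 (ne_of_mem_erase hα)
    field_simp
    ring
  have hcard : #F = d - 1 := by
    rw [card_erase_of_mem (one_mem_nthRootsFinset hd), hζ.card_nthRootsFinset]
  have htwice : 2 * nontrivialRootSum K d 1 0 = d - 1 := by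
    calc 2 * nontrivialRootSum K d 1 0 = ∑ α ∈ F, (1 / (1 - α) + 1 / (1 - α⁻¹)) := by
          rw [sum_add_distrib, sum_erase_one_nthRootsFinset_inv (fun α => 1 / (1 - α))]
          simp only [nontrivialRootSum, pow_zero, pow_one]
          ring
      _ = d - 1 := by
          rw [sum_congr rfl hpair, sum_const, hcard, nsmul_one, Nat.cast_sub hd, Nat.cast_one]
  linear_combination htwice / 2

lemma nontrivialRootSum_one [CharZero K] {ζ : K} (hζ : IsPrimitiveRoot ζ d) {q : ℕ}
    (hqd : q < d) : nontrivialRootSum K d 1 q = ((d : K) - 1) / 2 - q := by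
  induction q with
  | zero => simpa using nontrivialRootSum_one_zero hζ hqd
  | succ q ih =>
    rw [nontrivialRootSum_succ_succ, ih (by omega),
      nontrivialRootSum_zero_left hζ q.succ_pos hqd]
    push_cast
    ring

lemma nontrivialRootSum_two_eq_add [CharZero K] {ζ : K} (hζ : IsPrimitiveRoot ζ d) {q : ℕ}
    (hqd : q < d) :
    nontrivialRootSum K d 2 q = nontrivialRootSum K d 2 0 + q * ((d - 2 : K) - q) / 2 := by
  induction q with
  | zero => simp
  | succ q ih =>
    rw [nontrivialRootSum_succ_succ, ih (by omega), nontrivialRootSum_one hζ hqd]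
    push_cast
    ring

lemma nontrivialRootSum_two_zero [CharZero K] {ζ : K} (hζ : IsPrimitiveRoot ζ d) (hd : 0 < d) :
    nontrivialRootSum K d 2 0 = ((d : K) - 1) * (5 - d) / 12 := by
  have hsum := sum_range_nontrivialRootSum (K := K) (d := d) 2
  rw [sum_congr rfl fun q hq => nontrivialRootSum_two_eq_add hζ (mem_range.1 hq),
    sum_add_distrib, ← sum_div, sum_range_natCast_mul_sub, sum_const, card_range,
    nsmul_eq_mul] at hsum
  have hd' : (d : K) ≠ 0 := Nat.cast_ne_zero.2 hd.ne'
  apply mul_left_cancel₀ hd'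
  linear_combination hsum

lemma nontrivialRootSum_two [CharZero K] {ζ : K} (hζ : IsPrimitiveRoot ζ d) {q : ℕ}
    (hqd : q < d) :
    nontrivialRootSum K d 2 q = ((d : K) - 1) * (5 - d) / 12 + q * ((d - 2 : K) - q) / 2 := by
  rw [nontrivialRootSum_two_eq_add hζ hqd, nontrivialRootSum_two_zero hζ (by omega)]

end NontrivialRootSum

theorem stmt3_general (d q : ℕ) (hq : q < d) :
    ∃ c₁ c₂ : ℂ, Filter.Tendsto
      (fun t : ℂ =>
        (1 / (d : ℂ)) * ∑ α ∈ (Polynomial.nthRoots d (1 : ℂ)).toFinset,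
            α⁻¹ ^ q / (1 - α * t) ^ 2
          - c₂ / (1 - t) ^ 2 - c₁ / (1 - t))
      (nhdsWithin 1 {(1 : ℂ)}ᶜ)
      (nhds (-(((d : ℂ) - 1) * ((d : ℂ) - 5)) / (12 * d)
        - ((q : ℂ) ^ 2 + 2 * q - q * d) / (2 * d))) := by
  have hd : 0 < d := by omega
  have hζ := Complex.isPrimitiveRoot_exp d hd.ne'
  set F := (nthRootsFinset d (1 : ℂ)).erase 1
  refine ⟨0, 1 / d, ?_⟩
  have hsplit : ∀ t : ℂ, (1 / (d : ℂ)) * ∑ α ∈ (nthRoots d (1 : ℂ)).toFinset,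
      α⁻¹ ^ q / (1 - α * t) ^ 2 - 1 / d / (1 - t) ^ 2 - 0 / (1 - t) =
        1 / d * ∑ α ∈ F, α⁻¹ ^ q / (1 - α * t) ^ 2 := by
    intro t
    rw [← nthRootsFinset_def, ← add_sum_erase _ _ (one_mem_nthRootsFinset hd)]
    simp only [inv_one, one_pow, one_mul, zero_div]
    ring
  have hlim : Tendsto (fun t : ℂ => 1 / (d : ℂ) * ∑ α ∈ F, α⁻¹ ^ q / (1 - α * t) ^ 2) (nhds 1)
      (nhds (1 / d * nontrivialRootSum ℂ d 2 q)) := by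
    refine tendsto_const_nhds.mul (tendsto_finsetSum _ fun α hα => ?_)
    have hden : Tendsto (fun t : ℂ => (1 - α * t) ^ 2) (nhds 1) (nhds ((1 - α) ^ 2)) :=
      (by fun_prop : Continuous fun t : ℂ => (1 - α * t) ^ 2).tendsto' 1 _ (by rw [mul_one])
    exact tendsto_const_nhds.div hden
      (pow_ne_zero 2 (ne_zero_and_one_sub_ne_zero_of_mem_erase_one hα).2)
  have hvalue : 1 / (d : ℂ) * nontrivialRootSum ℂ d 2 q =
      -(((d : ℂ) - 1) * ((d : ℂ) - 5)) / (12 * d) - ((q : ℂ) ^ 2 + 2 * q - q * d) / (2 * d) := by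
    rw [nontrivialRootSum_two hζ hq]
    field_simp
    ring
  rw [hvalue] at hlim
  exact (hlim.mono_left nhdsWithin_le_nhds).congr fun t => (hsplit t).symm

theorem stmt3 (d q : ℕ) (hd : 1 ≤ d) (hq : q < d) :
    ∃ c₁ c₂ : ℂ, Filter.Tendsto
      (fun t : ℂ =>
        (1 / (d : ℂ)) * ∑ α ∈ (Polynomial.nthRoots d (1 : ℂ)).toFinset,
            α⁻¹ ^ q / (1 - α * t) ^ 2
          - c₂ / (1 - t) ^ 2 - c₁ / (1 - t))
      (nhdsWithin 1 {(1 : ℂ)}ᶜ)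
      (nhds (-(((d : ℂ) - 1) * ((d : ℂ) - 5)) / (12 * d)
        - ((q : ℂ) ^ 2 + 2 * q - q * d) / (2 * d))) :=
  stmt3_general d q hq
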